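/- For every real y ≠ 0, ∫_{−1}^{1} √(1 − x²)·cos(2πxy) dx = J₁(2πy)/(2y). -/

import Mathlib

/-!
Expand the cosine in its Taylor series and integrate term by term (dominated convergence).
The substitution `x = sin θ` turns the even moments of the semicircle weight into Wallis
integrals, `∫_{-1}^{1} x^{2k} √(1 - x²) dx = π (2k)! / (2 · 4^k k! (k+1)!)`, and with these
moments the series is exactly the power series of `J₁(2πy) / (2y)`.
-/

open Real

/-- The Bessel function of the first kind of order one, defined by its
everywhere-convergent power series. -/
noncomputable def J1 (x : ℝ) : ℝ :=
  ∑' k : ℕ, (-1 : ℝ) ^ k / ((Nat.factorial k : ℝ) * (Nat.factorial (k + 1) : ℝ)) * (x / 2) ^ (2 * k + 1)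

open intervalIntegral MeasureTheory
open scoped Nat Interval

theorem integral_sin_pow_add_two_neg_pi_div_two (n : ℕ) :
    ∫ θ in -(π / 2)..π / 2, sin θ ^ (n + 2)
      = (n + 1) / (n + 2) * ∫ θ in -(π / 2)..π / 2, sin θ ^ n := by
  simp [integral_sin_pow]

theorem integral_sin_pow_two_mul_neg_pi_div_two (k : ℕ) :
    ∫ θ in -(π / 2)..π / 2, sin θ ^ (2 * k) = π * (2 * k)! / (4 ^ k * (k ! : ℝ) ^ 2) := by
  induction k with
  | zero => simp
  | succ k ih =>
    rw [mul_add_one, integral_sin_pow_add_two_neg_pi_div_two, ih, Nat.factorial_succ,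
      show 2 * k + 2 = (2 * k + 1) + 1 by ring, Nat.factorial_succ, Nat.factorial_succ]
    push_cast
    field_simp
    ring

theorem integral_sqrt_one_sub_sq_mul {f : ℝ → ℝ} (hf : Continuous f) :
    ∫ x in (-1 : ℝ)..1, √(1 - x ^ 2) * f x
      = ∫ θ in -(π / 2)..π / 2, cos θ ^ 2 * f (sin θ) :=
  calc
    _ = ∫ x in sin (-(π / 2))..sin (π / 2), √(1 - x ^ 2) * f x := by
          rw [sin_neg, sin_pi_div_two]
    _ = ∫ θ in -(π / 2)..π / 2, (√(1 - sin θ ^ 2) * f (sin θ)) * cos θ :=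
          (integral_comp_mul_deriv (fun x _ => hasDerivAt_sin x) continuousOn_cos
            (by fun_prop)).symm
    _ = ∫ θ in -(π / 2)..π / 2, cos θ ^ 2 * f (sin θ) := by
          refine integral_congr fun θ hθ => ?_
          rw [Set.uIcc_of_le (by linarith [pi_pos]), Set.mem_Icc] at hθ
          rw [← cos_eq_sqrt_one_sub_sin_sq hθ.1 hθ.2]
          ring

theorem integral_sqrt_one_sub_sq_mul_pow_two_mul (k : ℕ) :
    ∫ x in (-1 : ℝ)..1, √(1 - x ^ 2) * x ^ (2 * k)
      = π * (2 * k)! / (2 * 4 ^ k * k ! * (k + 1)!) := by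
  have hint (n : ℕ) : IntervalIntegrable (fun θ => sin θ ^ n) volume (-(π / 2)) (π / 2) :=
    (continuous_sin.pow n).intervalIntegrable _ _
  calc
    _ = ∫ θ in -(π / 2)..π / 2, sin θ ^ (2 * k) - sin θ ^ (2 * k + 2) := by
          rw [integral_sqrt_one_sub_sq_mul (by fun_prop)]
          congr with θ
          rw [cos_sq', pow_succ, pow_succ]
          ring
    _ = π * (2 * k)! / (2 * 4 ^ k * k ! * (k + 1)!) := by
          rw [integral_sub (hint _) (hint _), integral_sin_pow_add_two_neg_pi_div_two,
            integral_sin_pow_two_mul_neg_pi_div_two, Nat.factorial_succ]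
          push_cast
          field_simp
          ring

theorem hasSum_integral_mul_cos_mul {w : ℝ → ℝ} {a b : ℝ}
    (hw : IntervalIntegrable w volume a b) (c : ℝ) :
    HasSum (fun k : ℕ => (-1) ^ k * c ^ (2 * k) / (2 * k)! * ∫ x in a..b, w x * x ^ (2 * k))
      (∫ x in a..b, w x * cos (c * x)) := by
  set R := |c| * (|a| + |b|)
  have hR : Summable fun k : ℕ => R ^ (2 * k) / (2 * k)! :=
    (summable_pow_div_factorial R).comp_injective fun m n h => by omega
  have hcx {x : ℝ} (hx : x ∈ Ι a b) : |c * x| ≤ R := by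
    rw [abs_mul]
    refine mul_le_mul_of_nonneg_left (abs_le.mpr ?_) (abs_nonneg c)
    rcases Set.mem_uIoc.mp hx with ⟨_, _⟩ | ⟨_, _⟩ <;>
    constructor <;> linarith [neg_abs_le a, neg_abs_le b, le_abs_self a, le_abs_self b]
  have hterm (k : ℕ) : (-1) ^ k * c ^ (2 * k) / (2 * k)! * ∫ x in a..b, w x * x ^ (2 * k)
      = ∫ x in a..b, w x * ((-1) ^ k * (c * x) ^ (2 * k) / (2 * k)!) := by
    rw [← intervalIntegral.integral_const_mul]
    congr with x
    ring
  simp_rw [hterm]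
  refine hasSum_integral_of_dominated_convergence (fun k x => |w x| * (R ^ (2 * k) / (2 * k)!))
    (fun k => hw.def'.aestronglyMeasurable.mul (by fun_prop : Continuous _).aestronglyMeasurable)
    (fun k => ae_of_all _ fun x hx => ?_) (ae_of_all _ fun x _ => hR.mul_left _) ?_
    (ae_of_all _ fun x _ => (hasSum_cos (c * x)).mul_left _)
  · rw [norm_mul, norm_div, norm_mul, norm_pow, norm_neg, norm_one, one_pow, one_mul, norm_pow,
      Real.norm_eq_abs, Real.norm_eq_abs, RCLike.norm_natCast]
    gcongr
    exact hcx hx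
  · simp_rw [tsum_mul_left]
    exact hw.abs.mul_const _

theorem stmt_5 (y : ℝ) (hy : y ≠ 0) :
    ∫ x in (-1 : ℝ)..1, Real.sqrt (1 - x ^ 2) * Real.cos (2 * π * x * y)
      = J1 (2 * π * y) / (2 * y) := by
  have hsqrt : Continuous fun x : ℝ => √(1 - x ^ 2) := by fun_prop
  have hseries := hasSum_integral_mul_cos_mul (hsqrt.intervalIntegrable (-1) 1) (2 * π * y)
  simp_rw [integral_sqrt_one_sub_sq_mul_pow_two_mul] at hseries
  have hterm (k : ℕ) :
      (-1) ^ k * (2 * π * y) ^ (2 * k) / (2 * k)! * (π * (2 * k)! / (2 * 4 ^ k * k ! * (k + 1)!))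
        = (-1) ^ k / (k ! * (k + 1)!) * (2 * π * y / 2) ^ (2 * k + 1) / (2 * y) := by
    rw [mul_pow, pow_mul, pow_succ]
    field_simp
    ring
  rw [J1, ← tsum_div_const, ← tsum_congr hterm, hseries.tsum_eq]
  congr with x
  ring_nf
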